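/- arXiv:2012.13818 — 4 statements merged into one kernel-verified Lean document; each statement's English description precedes it below -/
import Mathlib

section
/- Let $L, N, \mu:[0,\lambda]\to\mathbb{R}$ be continuous with positive bounds $L_m \le L \le L_M$, $N_m \le N \le N_M$, $\mu_m \le \mu \le \mu_M$. Define $E(z) = \exp\big(2\int_0^z (\mu(\sigma) - \sigma N(\sigma))/L(\sigma)\,d\sigma\big)$ and $\Phi(\xi) = \int_0^{\xi} E(z)/L(z)\,dz$. Then for all $\xi \in [0,\lambda]$: $\frac{\sqrt{\pi}}{2}\frac{\sqrt{L_m}}{L_M\sqrt{N_M}}\,\mathrm{erf}\big(\sqrt{N_M/L_m}\,\xi\big) \le \Phi(\xi) \le \frac{1}{2\mu_M}\exp\big(2\mu_M \xi/L_m\big)$. -/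
noncomputable def erf (x : ℝ) : ℝ :=
  (2 / Real.sqrt Real.pi) * ∫ t in (0:ℝ)..x, Real.exp (-t ^ 2)

/-! The exponent integrand f = (μ - σN)/L satisfies -(N_M/L_m) σ ≤ f ≤ μ_M/L_m (using μ ≥ 0,
σN ≥ 0 and L ≥ L_m), so exp(-(N_M/L_m) z²) ≤ E(z) ≤ exp(2μ_M z/L_m). Dividing by L ∈ [L_m, L_M]
and integrating once more, the Gaussian integral yields the erf lower bound, and the exponential
integral (e^{cξ} - 1)/(c L_m) with c = 2μ_M/L_m yields the upper bound. -/

open Real Set MeasureTheory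

lemma integral_exp_mul_eq {c : ℝ} (hc : c ≠ 0) (b : ℝ) :
    ∫ x in (0:ℝ)..b, exp (c * x) = (exp (c * b) - 1) / c := by
  rw [intervalIntegral.integral_comp_mul_left (fun x => exp x) hc, integral_exp, mul_zero,
    exp_zero, smul_eq_mul, inv_mul_eq_div]

lemma integral_exp_neg_mul_sq_eq_erf {k : ℝ} (hk : k ≠ 0) (b : ℝ) :
    ∫ z in (0:ℝ)..b, exp (-(k * z) ^ 2) = √π / (2 * k) * erf (k * b) := by
  have hπ : √π ≠ 0 := (sqrt_pos.mpr pi_pos).ne'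
  rw [intervalIntegral.integral_comp_mul_left (fun t => exp (-t ^ 2)) hk, mul_zero, smul_eq_mul,
    erf]
  field_simp

lemma drift_le {σ m n l mM lm : ℝ} (hσ : 0 ≤ σ) (hn : 0 ≤ n) (hm : m ≤ mM) (hmM : 0 ≤ mM)
    (hlm : 0 < lm) (hl : lm ≤ l) : (m - σ * n) / l ≤ mM / lm :=
  div_le_div₀ hmM (by nlinarith) hlm hl

lemma neg_mul_le_drift {σ m n l nM lm : ℝ} (hσ : 0 ≤ σ) (hm : 0 ≤ m) (hn : n ≤ nM) (hnM : 0 ≤ nM)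
    (hlm : 0 < lm) (hl : lm ≤ l) : -(nM / lm) * σ ≤ (m - σ * n) / l := by
  have hl0 : 0 < l := hlm.trans_le hl
  calc -(nM / lm) * σ = -(σ * nM / lm) := by ring
    _ ≤ -(σ * nM / l) := neg_le_neg (div_le_div_of_nonneg_left (by positivity) hlm hl)
    _ ≤ (m - σ * n) / l := by
      rw [← neg_div]
      exact div_le_div_of_nonneg_right (by nlinarith) hl0.le

lemma integral_div_le {E F L : ℝ → ℝ} {ξ Lm : ℝ} (hξ : 0 ≤ ξ) (hLm : 0 < Lm)
    (hEL : IntervalIntegrable (fun z => E z / L z) volume 0 ξ)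
    (hF : IntervalIntegrable F volume 0 ξ) (hF0 : ∀ z ∈ Icc 0 ξ, 0 ≤ F z)
    (hEF : ∀ z ∈ Icc 0 ξ, E z ≤ F z) (hL : ∀ z ∈ Icc 0 ξ, Lm ≤ L z) :
    ∫ z in (0:ℝ)..ξ, E z / L z ≤ (∫ z in (0:ℝ)..ξ, F z) / Lm := by
  rw [← intervalIntegral.integral_div]
  exact intervalIntegral.integral_mono_on hξ hEL (hF.div_const Lm) fun z hz =>
    (div_le_div_of_nonneg_right (hEF z hz) (hLm.trans_le (hL z hz)).le).trans
      (div_le_div_of_nonneg_left (hF0 z hz) hLm (hL z hz))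

lemma le_integral_div {E F L : ℝ → ℝ} {ξ LM : ℝ} (hξ : 0 ≤ ξ)
    (hEL : IntervalIntegrable (fun z => E z / L z) volume 0 ξ)
    (hF : IntervalIntegrable F volume 0 ξ) (hF0 : ∀ z ∈ Icc 0 ξ, 0 ≤ F z)
    (hFE : ∀ z ∈ Icc 0 ξ, F z ≤ E z) (hL0 : ∀ z ∈ Icc 0 ξ, 0 < L z)
    (hL : ∀ z ∈ Icc 0 ξ, L z ≤ LM) :
    (∫ z in (0:ℝ)..ξ, F z) / LM ≤ ∫ z in (0:ℝ)..ξ, E z / L z := by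
  rw [← intervalIntegral.integral_div]
  exact intervalIntegral.integral_mono_on hξ (hF.div_const LM) hEL fun z hz =>
    div_le_div₀ ((hF0 z hz).trans (hFE z hz)) (hFE z hz) (hL0 z hz) (hL z hz)

lemma exp_two_integral_drift_le {L N mu : ℝ → ℝ} {z Lm muM : ℝ} (hz : 0 ≤ z) (hLm : 0 < Lm)
    (hmuM : 0 ≤ muM) (hint : IntervalIntegrable (fun σ => (mu σ - σ * N σ) / L σ) volume 0 z)
    (hL : ∀ σ ∈ Icc 0 z, Lm ≤ L σ) (hN : ∀ σ ∈ Icc 0 z, 0 ≤ N σ)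
    (hmu : ∀ σ ∈ Icc 0 z, mu σ ≤ muM) :
    exp (2 * ∫ σ in (0:ℝ)..z, (mu σ - σ * N σ) / L σ) ≤ exp (2 * muM / Lm * z) := by
  have hbound : ∫ σ in (0:ℝ)..z, (mu σ - σ * N σ) / L σ ≤ ∫ _ in (0:ℝ)..z, muM / Lm :=
    intervalIntegral.integral_mono_on hz hint intervalIntegrable_const fun σ hσ =>
      drift_le hσ.1 (hN σ hσ) (hmu σ hσ) hmuM hLm (hL σ hσ)
  rw [intervalIntegral.integral_const, sub_zero, smul_eq_mul] at hbound
  exact exp_le_exp.mpr (by linear_combination 2 * hbound)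

lemma exp_neg_sq_le_exp_two_integral_drift {L N mu : ℝ → ℝ} {z Lm NM : ℝ} (hz : 0 ≤ z)
    (hLm : 0 < Lm) (hNM : 0 ≤ NM)
    (hint : IntervalIntegrable (fun σ => (mu σ - σ * N σ) / L σ) volume 0 z)
    (hL : ∀ σ ∈ Icc 0 z, Lm ≤ L σ) (hN : ∀ σ ∈ Icc 0 z, N σ ≤ NM)
    (hmu : ∀ σ ∈ Icc 0 z, 0 ≤ mu σ) :
    exp (-(√(NM / Lm) * z) ^ 2) ≤ exp (2 * ∫ σ in (0:ℝ)..z, (mu σ - σ * N σ) / L σ) := by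
  have hbound : ∫ σ in (0:ℝ)..z, -(NM / Lm) * σ ≤ ∫ σ in (0:ℝ)..z, (mu σ - σ * N σ) / L σ :=
    intervalIntegral.integral_mono_on hz
      ((continuous_const.mul continuous_id).intervalIntegrable _ _) hint fun σ hσ =>
      neg_mul_le_drift hσ.1 (hmu σ hσ) (hN σ hσ) hNM hLm (hL σ hσ)
  rw [intervalIntegral.integral_const_mul, integral_id] at hbound
  rw [mul_pow, sq_sqrt (div_nonneg hNM hLm.le)]
  exact exp_le_exp.mpr (by linarith)

lemma intervalIntegrable_exp_two_integral_div {f L : ℝ → ℝ} {ξ : ℝ} (hξ : 0 ≤ ξ)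
    (hf : ContinuousOn f (Icc 0 ξ)) (hL : ContinuousOn L (Icc 0 ξ))
    (hL0 : ∀ z ∈ Icc 0 ξ, L z ≠ 0) :
    IntervalIntegrable (fun z => exp (2 * ∫ σ in (0:ℝ)..z, f σ) / L z) volume 0 ξ := by
  have hF : ContinuousOn (fun z => ∫ σ in (0:ℝ)..z, f σ) (Icc 0 ξ) := by
    rw [← uIcc_of_le hξ] at hf ⊢
    exact intervalIntegral.continuousOn_primitive_interval hf.integrableOn_uIcc
  exact ((continuous_exp.comp_continuousOn (continuousOn_const.mul hF)).div hL hL0)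
    |>.intervalIntegrable_of_Icc hξ

lemma integral_exp_two_integral_drift_div_le {L N mu : ℝ → ℝ} {ξ Lm muM : ℝ} (hξ : 0 ≤ ξ)
    (hLm : 0 < Lm) (hmuM : 0 < muM)
    (hdrift : ∀ z ∈ Icc 0 ξ, IntervalIntegrable (fun σ => (mu σ - σ * N σ) / L σ) volume 0 z)
    (hEL : IntervalIntegrable
      (fun z => exp (2 * ∫ σ in (0:ℝ)..z, (mu σ - σ * N σ) / L σ) / L z) volume 0 ξ)
    (hL : ∀ z ∈ Icc 0 ξ, Lm ≤ L z) (hN : ∀ z ∈ Icc 0 ξ, 0 ≤ N z)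
    (hmu : ∀ z ∈ Icc 0 ξ, mu z ≤ muM) :
    ∫ z in (0:ℝ)..ξ, exp (2 * ∫ σ in (0:ℝ)..z, (mu σ - σ * N σ) / L σ) / L z ≤
      1 / (2 * muM) * exp (2 * muM * ξ / Lm) := by
  have hc : 2 * muM / Lm ≠ 0 := by positivity
  have hexp : ∀ z ∈ Icc 0 ξ, exp (2 * ∫ σ in (0:ℝ)..z, (mu σ - σ * N σ) / L σ) ≤
      exp (2 * muM / Lm * z) := fun z hz =>
    have hsub : Icc 0 z ⊆ Icc 0 ξ := Icc_subset_Icc_right hz.2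
    exp_two_integral_drift_le hz.1 hLm hmuM.le (hdrift z hz) (fun σ hσ => hL σ (hsub hσ))
      (fun σ hσ => hN σ (hsub hσ)) (fun σ hσ => hmu σ (hsub hσ))
  calc _ ≤ (∫ z in (0:ℝ)..ξ, exp (2 * muM / Lm * z)) / Lm :=
        integral_div_le hξ hLm hEL ((by fun_prop : Continuous _).intervalIntegrable _ _)
          (fun _ _ => (exp_pos _).le) hexp hL
    _ = (exp (2 * muM * ξ / Lm) - 1) / (2 * muM) := by
        rw [integral_exp_mul_eq hc]
        field_simp
    _ ≤ _ := by
        rw [one_div_mul_eq_div]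
        gcongr
        linarith

lemma le_integral_exp_two_integral_drift_div {L N mu : ℝ → ℝ} {ξ Lm LM NM : ℝ} (hξ : 0 ≤ ξ)
    (hLm : 0 < Lm) (hNM : 0 < NM)
    (hdrift : ∀ z ∈ Icc 0 ξ, IntervalIntegrable (fun σ => (mu σ - σ * N σ) / L σ) volume 0 z)
    (hEL : IntervalIntegrable
      (fun z => exp (2 * ∫ σ in (0:ℝ)..z, (mu σ - σ * N σ) / L σ) / L z) volume 0 ξ)
    (hLmL : ∀ z ∈ Icc 0 ξ, Lm ≤ L z) (hLLM : ∀ z ∈ Icc 0 ξ, L z ≤ LM)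
    (hN : ∀ z ∈ Icc 0 ξ, N z ≤ NM) (hmu : ∀ z ∈ Icc 0 ξ, 0 ≤ mu z) :
    √π / 2 * (√Lm / (LM * √NM)) * erf (√(NM / Lm) * ξ) ≤
      ∫ z in (0:ℝ)..ξ, exp (2 * ∫ σ in (0:ℝ)..z, (mu σ - σ * N σ) / L σ) / L z := by
  have h0 : (0:ℝ) ∈ Icc 0 ξ := ⟨le_rfl, hξ⟩
  have hLM : 0 < LM := hLm.trans_le ((hLmL 0 h0).trans (hLLM 0 h0))
  have hk : √(NM / Lm) ≠ 0 := (sqrt_pos.mpr (div_pos hNM hLm)).ne'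
  have hexp : ∀ z ∈ Icc 0 ξ, exp (-(√(NM / Lm) * z) ^ 2) ≤
      exp (2 * ∫ σ in (0:ℝ)..z, (mu σ - σ * N σ) / L σ) := fun z hz =>
    have hsub : Icc 0 z ⊆ Icc 0 ξ := Icc_subset_Icc_right hz.2
    exp_neg_sq_le_exp_two_integral_drift hz.1 hLm hNM.le (hdrift z hz)
      (fun σ hσ => hLmL σ (hsub hσ)) (fun σ hσ => hN σ (hsub hσ)) (fun σ hσ => hmu σ (hsub hσ))
  calc _ = (∫ z in (0:ℝ)..ξ, exp (-(√(NM / Lm) * z) ^ 2)) / LM := by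
        rw [integral_exp_neg_mul_sq_eq_erf hk, sqrt_div hNM.le]
        have : √NM ≠ 0 := (sqrt_pos.mpr hNM).ne'
        have : √Lm ≠ 0 := (sqrt_pos.mpr hLm).ne'
        field_simp
    _ ≤ _ := le_integral_div hξ hEL ((by fun_prop : Continuous _).intervalIntegrable _ _)
        (fun _ _ => (exp_pos _).le) hexp (fun z hz => hLm.trans_le (hLmL z hz)) hLLM

theorem stmt_3_general (lam Lm LM Nm NM mum muM : ℝ)
    (L N mu : ℝ → ℝ)
    (hLc : ContinuousOn L (Set.Icc 0 lam)) (hNc : ContinuousOn N (Set.Icc 0 lam))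
    (hmuc : ContinuousOn mu (Set.Icc 0 lam))
    (hLm : 0 < Lm) (hNm : 0 < Nm) (hmum : 0 < mum)
    (hL : ∀ z ∈ Set.Icc (0:ℝ) lam, Lm ≤ L z ∧ L z ≤ LM)
    (hN : ∀ z ∈ Set.Icc (0:ℝ) lam, Nm ≤ N z ∧ N z ≤ NM)
    (hmu : ∀ z ∈ Set.Icc (0:ℝ) lam, mum ≤ mu z ∧ mu z ≤ muM)
    (E Phi : ℝ → ℝ)
    (hE : ∀ z ∈ Set.Icc (0:ℝ) lam,
      E z = Real.exp (2 * ∫ σ in (0:ℝ)..z, (mu σ - σ * N σ) / L σ))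
    (hPhi : ∀ ξ ∈ Set.Icc (0:ℝ) lam, Phi ξ = ∫ z in (0:ℝ)..ξ, E z / L z) :
    ∀ ξ ∈ Set.Icc (0:ℝ) lam,
      Real.sqrt Real.pi / 2 * (Real.sqrt Lm / (LM * Real.sqrt NM)) *
        erf (Real.sqrt (NM / Lm) * ξ) ≤ Phi ξ ∧
      Phi ξ ≤ 1 / (2 * muM) * Real.exp (2 * muM * ξ / Lm) := by
  intro ξ hξ
  have hsub : Icc 0 ξ ⊆ Icc 0 lam := Icc_subset_Icc_right hξ.2
  have h0 : (0:ℝ) ∈ Icc 0 lam := ⟨le_rfl, hξ.1.trans hξ.2⟩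
  have hL0 : ∀ z ∈ Icc 0 ξ, L z ≠ 0 := fun z hz => (hLm.trans_le (hL z (hsub hz)).1).ne'
  have hdrift : ContinuousOn (fun σ => (mu σ - σ * N σ) / L σ) (Icc 0 ξ) :=
    ((hmuc.mono hsub).sub (continuousOn_id.mul (hNc.mono hsub))).div (hLc.mono hsub) hL0
  have hdriftInt (z : ℝ) (hz : z ∈ Icc 0 ξ) :
      IntervalIntegrable (fun σ => (mu σ - σ * N σ) / L σ) volume 0 z :=
    (hdrift.mono (Icc_subset_Icc_right hz.2)).intervalIntegrable_of_Icc hz.1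
  have hEL := intervalIntegrable_exp_two_integral_div hξ.1 hdrift (hLc.mono hsub) hL0
  have hPhiξ : Phi ξ = ∫ z in (0:ℝ)..ξ,
      exp (2 * ∫ σ in (0:ℝ)..z, (mu σ - σ * N σ) / L σ) / L z := by
    rw [hPhi ξ hξ]
    refine intervalIntegral.integral_congr fun z hz => ?_
    rw [uIcc_of_le hξ.1] at hz
    simp only [hE z (hsub hz)]
  have hNM : 0 < NM := hNm.trans_le ((hN 0 h0).1.trans (hN 0 h0).2)
  have hmuM : 0 < muM := hmum.trans_le ((hmu 0 h0).1.trans (hmu 0 h0).2)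
  rw [hPhiξ]
  exact ⟨le_integral_exp_two_integral_drift_div hξ.1 hLm hNM hdriftInt hEL
      (fun z hz => (hL z (hsub hz)).1) (fun z hz => (hL z (hsub hz)).2)
      (fun z hz => (hN z (hsub hz)).2) (fun z hz => hmum.le.trans (hmu z (hsub hz)).1),
    integral_exp_two_integral_drift_div_le hξ.1 hLm hmuM hdriftInt hEL
      (fun z hz => (hL z (hsub hz)).1) (fun z hz => hNm.le.trans (hN z (hsub hz)).1)
      (fun z hz => (hmu z (hsub hz)).2)⟩

theorem stmt_3 (lam Lm LM Nm NM mum muM : ℝ) (hlam : 0 < lam)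
    (L N mu : ℝ → ℝ)
    (hLc : ContinuousOn L (Set.Icc 0 lam)) (hNc : ContinuousOn N (Set.Icc 0 lam))
    (hmuc : ContinuousOn mu (Set.Icc 0 lam))
    (hLm : 0 < Lm) (hNm : 0 < Nm) (hmum : 0 < mum)
    (hL : ∀ z ∈ Set.Icc (0:ℝ) lam, Lm ≤ L z ∧ L z ≤ LM)
    (hN : ∀ z ∈ Set.Icc (0:ℝ) lam, Nm ≤ N z ∧ N z ≤ NM)
    (hmu : ∀ z ∈ Set.Icc (0:ℝ) lam, mum ≤ mu z ∧ mu z ≤ muM)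
    (E Phi : ℝ → ℝ)
    (hE : ∀ z ∈ Set.Icc (0:ℝ) lam,
      E z = Real.exp (2 * ∫ σ in (0:ℝ)..z, (mu σ - σ * N σ) / L σ))
    (hPhi : ∀ ξ ∈ Set.Icc (0:ℝ) lam, Phi ξ = ∫ z in (0:ℝ)..ξ, E z / L z) :
    ∀ ξ ∈ Set.Icc (0:ℝ) lam,
      Real.sqrt Real.pi / 2 * (Real.sqrt Lm / (LM * Real.sqrt NM)) *
        erf (Real.sqrt (NM / Lm) * ξ) ≤ Phi ξ ∧
      Phi ξ ≤ 1 / (2 * muM) * Real.exp (2 * muM * ξ / Lm) :=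
  stmt_3_general lam Lm LM Nm NM mum muM L N mu hLc hNc hmuc hLm hNm hmum hL hN hmu E Phi hE hPhi
end

section
/- Let $\lambda>0$, $L_m, L_M, \widetilde{L}, \mu_M, \widetilde{\mu} > 0$. Let $L_1, L_2, \mu_1, \mu_2 : [0,\lambda]\to\mathbb{R}$ be continuous with $L_m \le L_i \le L_M$ and $0 < \mu_i \le \mu_M$, and suppose $\|L_1 - L_2\|_\infty \le \widetilde{L}\,\delta$ and $\|\mu_1 - \mu_2\|_\infty \le \widetilde{\mu}\,\delta$ for some $\delta \ge 0$. Define $U_i(z) = \exp\big(2\int_0^z \mu_i(\sigma)/L_i(\sigma)d\sigma\big)$. Then for all $z\in[0,\lambda]$, $|U_1(z) - U_2(z)| \le \frac{2\exp(2\mu_M z/L_m)}{L_m^2}\, z\,(\mu_M \widetilde{L} + L_m \widetilde{\mu})\,\delta$. -/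
/-!
The exponents `2 ∫₀ᶻ μᵢ/Lᵢ` are both at most `2 μM z / Lm`, so by the mean value theorem for `exp`
the difference `|U₁ - U₂|` is at most `exp (2 μM z / Lm)` times the difference of the exponents.
That difference is controlled pointwise through
`μ₁/L₁ - μ₂/L₂ = (μ₁ - μ₂)/L₁ + μ₂ (L₂ - L₁)/(L₁ L₂)`, and integrating over `[0, z]` gives the factor `z`.
-/

open Set

theorem Real.abs_exp_sub_exp_le_of_le {s t M : ℝ} (hs : s ≤ M) (ht : t ≤ M) :
    |Real.exp s - Real.exp t| ≤ Real.exp M * |s - t| := by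
  wlog hst : s ≤ t generalizing s t
  · rw [abs_sub_comm, abs_sub_comm s t]
    exact this ht hs (le_of_not_ge hst)
  have hexp_le : Real.exp s ≤ Real.exp t := Real.exp_le_exp.2 hst
  have hlin : Real.exp t * (1 + (s - t)) ≤ Real.exp s := by
    calc Real.exp t * (1 + (s - t)) ≤ Real.exp t * Real.exp (s - t) :=
          mul_le_mul_of_nonneg_left (by linarith [Real.add_one_le_exp (s - t)]) (Real.exp_pos t).le
      _ = Real.exp s := by rw [← Real.exp_add]; ring_nf
  have htM : Real.exp t ≤ Real.exp M := Real.exp_le_exp.2 ht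
  rw [abs_of_nonpos (by linarith), abs_of_nonpos (by linarith)]
  nlinarith [Real.exp_pos t]

theorem abs_div_sub_div_le {μ₁ μ₂ L₁ L₂ Lm μM : ℝ} (hLm : 0 < Lm) (hL₁ : Lm ≤ L₁) (hL₂ : Lm ≤ L₂)
    (hμ₂ : |μ₂| ≤ μM) :
    |μ₁ / L₁ - μ₂ / L₂| ≤ μM * |L₁ - L₂| / Lm ^ 2 + |μ₁ - μ₂| / Lm := by
  have hL₁pos : 0 < L₁ := hLm.trans_le hL₁
  have hL₂pos : 0 < L₂ := hLm.trans_le hL₂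
  have hsplit : μ₁ / L₁ - μ₂ / L₂ = μ₂ * (L₂ - L₁) / (L₁ * L₂) + (μ₁ - μ₂) / L₁ := by
    field_simp
    ring
  have hL : |μ₂ * (L₂ - L₁) / (L₁ * L₂)| ≤ μM * |L₁ - L₂| / Lm ^ 2 := by
    rw [abs_div, abs_mul, abs_of_pos (mul_pos hL₁pos hL₂pos), abs_sub_comm L₂, sq]
    have hμM : 0 ≤ μM := (abs_nonneg _).trans hμ₂
    exact div_le_div₀ (by positivity) (mul_le_mul_of_nonneg_right hμ₂ (abs_nonneg _))
      (by positivity) (mul_le_mul hL₁ hL₂ hLm.le hL₁pos.le)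
  have hμ : |(μ₁ - μ₂) / L₁| ≤ |μ₁ - μ₂| / Lm := by
    rw [abs_div, abs_of_pos hL₁pos]
    exact div_le_div_of_nonneg_left (abs_nonneg _) hLm hL₁
  rw [hsplit]
  exact (abs_add_le _ _).trans (add_le_add hL hμ)

theorem abs_intervalIntegral_le_mul_of_forall_mem_Icc {f : ℝ → ℝ} {z C : ℝ} (hz : 0 ≤ z)
    (h : ∀ x ∈ Icc 0 z, |f x| ≤ C) : |∫ x in 0..z, f x| ≤ C * z := by
  have h' : ∀ x ∈ uIoc 0 z, ‖f x‖ ≤ C := by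
    rw [uIoc_of_le hz]
    exact fun x hx => h x (Ioc_subset_Icc_self hx)
  simpa [abs_of_nonneg hz] using intervalIntegral.norm_integral_le_of_norm_le_const h'

section RatioIntegral

variable {z Lm μM : ℝ} {μ L μ₁ μ₂ L₁ L₂ : ℝ → ℝ}

theorem intervalIntegral_div_le (hz : 0 ≤ z) (hLm : 0 < Lm)
    (hL : ∀ x ∈ Icc 0 z, Lm ≤ L x) (hμ : ∀ x ∈ Icc 0 z, 0 < μ x ∧ μ x ≤ μM) :
    ∫ x in 0..z, μ x / L x ≤ μM / Lm * z := by
  refine (le_abs_self _).trans (abs_intervalIntegral_le_mul_of_forall_mem_Icc hz fun x hx => ?_)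
  have hLx := hL x hx
  obtain ⟨hμpos, hμle⟩ := hμ x hx
  rw [abs_of_nonneg (div_nonneg hμpos.le (hLm.trans_le hLx).le)]
  exact div_le_div₀ (hμpos.le.trans hμle) hμle hLm hLx

theorem abs_intervalIntegral_div_sub_intervalIntegral_div_le {εL εμ : ℝ} (hz : 0 ≤ z)
    (hLm : 0 < Lm) (hμ₁c : ContinuousOn μ₁ (Icc 0 z)) (hμ₂c : ContinuousOn μ₂ (Icc 0 z))
    (hL₁c : ContinuousOn L₁ (Icc 0 z)) (hL₂c : ContinuousOn L₂ (Icc 0 z))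
    (hL₁ : ∀ x ∈ Icc 0 z, Lm ≤ L₁ x) (hL₂ : ∀ x ∈ Icc 0 z, Lm ≤ L₂ x)
    (hμ₂ : ∀ x ∈ Icc 0 z, |μ₂ x| ≤ μM)
    (hLdiff : ∀ x ∈ Icc 0 z, |L₁ x - L₂ x| ≤ εL) (hμdiff : ∀ x ∈ Icc 0 z, |μ₁ x - μ₂ x| ≤ εμ) :
    |(∫ x in 0..z, μ₁ x / L₁ x) - ∫ x in 0..z, μ₂ x / L₂ x| ≤
      (μM * εL / Lm ^ 2 + εμ / Lm) * z := by
  have hint : ∀ {μ L : ℝ → ℝ}, ContinuousOn μ (Icc 0 z) → ContinuousOn L (Icc 0 z) →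
      (∀ x ∈ Icc 0 z, Lm ≤ L x) → IntervalIntegrable (fun x => μ x / L x) MeasureTheory.volume 0 z :=
    fun hμc hLc hL => ContinuousOn.intervalIntegrable <| by
      rw [uIcc_of_le hz]
      exact hμc.div hLc fun x hx => (hLm.trans_le (hL x hx)).ne'
  rw [← intervalIntegral.integral_sub (hint hμ₁c hL₁c hL₁) (hint hμ₂c hL₂c hL₂)]
  refine abs_intervalIntegral_le_mul_of_forall_mem_Icc hz fun x hx => ?_
  have hμM : 0 ≤ μM := (abs_nonneg _).trans (hμ₂ x hx)
  calc |μ₁ x / L₁ x - μ₂ x / L₂ x|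
      ≤ μM * |L₁ x - L₂ x| / Lm ^ 2 + |μ₁ x - μ₂ x| / Lm :=
        abs_div_sub_div_le hLm (hL₁ x hx) (hL₂ x hx) (hμ₂ x hx)
    _ ≤ μM * εL / Lm ^ 2 + εμ / Lm := by
        gcongr
        exacts [hLdiff x hx, hμdiff x hx]

end RatioIntegral

theorem stmt_4_general (lam Lm LM Lt muM muT δ : ℝ)
    (hLm : 0 < Lm)
    (L₁ L₂ mu₁ mu₂ : ℝ → ℝ)
    (hL₁c : ContinuousOn L₁ (Set.Icc 0 lam)) (hL₂c : ContinuousOn L₂ (Set.Icc 0 lam))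
    (hmu₁c : ContinuousOn mu₁ (Set.Icc 0 lam)) (hmu₂c : ContinuousOn mu₂ (Set.Icc 0 lam))
    (hL₁ : ∀ z ∈ Set.Icc (0:ℝ) lam, Lm ≤ L₁ z ∧ L₁ z ≤ LM)
    (hL₂ : ∀ z ∈ Set.Icc (0:ℝ) lam, Lm ≤ L₂ z ∧ L₂ z ≤ LM)
    (hmu₁ : ∀ z ∈ Set.Icc (0:ℝ) lam, 0 < mu₁ z ∧ mu₁ z ≤ muM)
    (hmu₂ : ∀ z ∈ Set.Icc (0:ℝ) lam, 0 < mu₂ z ∧ mu₂ z ≤ muM)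
    (hLdiff : ∀ z ∈ Set.Icc (0:ℝ) lam, |L₁ z - L₂ z| ≤ Lt * δ)
    (hmudiff : ∀ z ∈ Set.Icc (0:ℝ) lam, |mu₁ z - mu₂ z| ≤ muT * δ)
    (U₁ U₂ : ℝ → ℝ)
    (hU₁ : ∀ z ∈ Set.Icc (0:ℝ) lam, U₁ z = Real.exp (2 * ∫ σ in (0:ℝ)..z, mu₁ σ / L₁ σ))
    (hU₂ : ∀ z ∈ Set.Icc (0:ℝ) lam, U₂ z = Real.exp (2 * ∫ σ in (0:ℝ)..z, mu₂ σ / L₂ σ)) :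
    ∀ z ∈ Set.Icc (0:ℝ) lam,
      |U₁ z - U₂ z| ≤
        2 * Real.exp (2 * muM * z / Lm) / Lm ^ 2 * z * (muM * Lt + Lm * muT) * δ := by
  intro z hz
  have hsub : Icc 0 z ⊆ Icc 0 lam := Icc_subset_Icc le_rfl hz.2
  have ha := intervalIntegral_div_le hz.1 hLm (fun x hx => (hL₁ x (hsub hx)).1) (hmu₁ · <| hsub ·)
  have hb := intervalIntegral_div_le hz.1 hLm (fun x hx => (hL₂ x (hsub hx)).1) (hmu₂ · <| hsub ·)
  have hab := abs_intervalIntegral_div_sub_intervalIntegral_div_le hz.1 hLm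
    (hmu₁c.mono hsub) (hmu₂c.mono hsub) (hL₁c.mono hsub) (hL₂c.mono hsub)
    (fun x hx => (hL₁ x (hsub hx)).1) (fun x hx => (hL₂ x (hsub hx)).1)
    (fun x hx => (abs_of_pos (hmu₂ x (hsub hx)).1).trans_le (hmu₂ x (hsub hx)).2)
    (hLdiff · <| hsub ·) (hmudiff · <| hsub ·)
  have hM : 2 * muM * z / Lm = 2 * (muM / Lm * z) := by ring
  rw [hU₁ z hz, hU₂ z hz]
  calc _ ≤ Real.exp (2 * muM * z / Lm) * |2 * (∫ σ in (0:ℝ)..z, mu₁ σ / L₁ σ) -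
        2 * ∫ σ in (0:ℝ)..z, mu₂ σ / L₂ σ| :=
        Real.abs_exp_sub_exp_le_of_le (by linarith) (by linarith)
    _ ≤ Real.exp (2 * muM * z / Lm) * (2 * ((muM * (Lt * δ) / Lm ^ 2 + muT * δ / Lm) * z)) := by
        rw [← mul_sub, abs_mul, abs_two]
        gcongr
    _ = _ := by field_simp

theorem stmt_4 (lam Lm LM Lt muM muT δ : ℝ) (hlam : 0 < lam)
    (hLm : 0 < Lm) (hLM : 0 < LM) (hLt : 0 < Lt) (hmuM : 0 < muM) (hmut : 0 < muT)
    (hδ : 0 ≤ δ)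
    (L₁ L₂ mu₁ mu₂ : ℝ → ℝ)
    (hL₁c : ContinuousOn L₁ (Set.Icc 0 lam)) (hL₂c : ContinuousOn L₂ (Set.Icc 0 lam))
    (hmu₁c : ContinuousOn mu₁ (Set.Icc 0 lam)) (hmu₂c : ContinuousOn mu₂ (Set.Icc 0 lam))
    (hL₁ : ∀ z ∈ Set.Icc (0:ℝ) lam, Lm ≤ L₁ z ∧ L₁ z ≤ LM)
    (hL₂ : ∀ z ∈ Set.Icc (0:ℝ) lam, Lm ≤ L₂ z ∧ L₂ z ≤ LM)
    (hmu₁ : ∀ z ∈ Set.Icc (0:ℝ) lam, 0 < mu₁ z ∧ mu₁ z ≤ muM)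
    (hmu₂ : ∀ z ∈ Set.Icc (0:ℝ) lam, 0 < mu₂ z ∧ mu₂ z ≤ muM)
    (hLdiff : ∀ z ∈ Set.Icc (0:ℝ) lam, |L₁ z - L₂ z| ≤ Lt * δ)
    (hmudiff : ∀ z ∈ Set.Icc (0:ℝ) lam, |mu₁ z - mu₂ z| ≤ muT * δ)
    (U₁ U₂ : ℝ → ℝ)
    (hU₁ : ∀ z ∈ Set.Icc (0:ℝ) lam, U₁ z = Real.exp (2 * ∫ σ in (0:ℝ)..z, mu₁ σ / L₁ σ))
    (hU₂ : ∀ z ∈ Set.Icc (0:ℝ) lam, U₂ z = Real.exp (2 * ∫ σ in (0:ℝ)..z, mu₂ σ / L₂ σ)) :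
    ∀ z ∈ Set.Icc (0:ℝ) lam,
      |U₁ z - U₂ z| ≤
        2 * Real.exp (2 * muM * z / Lm) / Lm ^ 2 * z * (muM * Lt + Lm * muT) * δ :=
  stmt_4_general lam Lm LM Lt muM muT δ hLm L₁ L₂ mu₁ mu₂ hL₁c hL₂c hmu₁c hmu₂c hL₁ hL₂ hmu₁ hmu₂
    hLdiff hmudiff U₁ U₂ hU₁ hU₂
end

section
/- Let $\mathrm{Ste}, N_M, N_m, L_m, L_M, \mu_M > 0$ and define for $\lambda > 0$: $\mathcal{V}_2(\lambda) = \frac{\mathrm{Ste}}{\sqrt{\pi}}\frac{\sqrt{N_M}}{\sqrt{L_m}} L_M \frac{\exp(2\lambda\mu_M/L_m - \lambda^2 N_m/L_M)}{\mathrm{erf}(\sqrt{N_M/L_m}\,\lambda)}$. Then $\mathcal{V}_2$ is continuous and positive on $(0,\infty)$, $\mathcal{V}_2(\lambda) \to +\infty$ as $\lambda \to 0^+$, and $\mathcal{V}_2(\lambda) \to 0$ as $\lambda \to +\infty$; consequently the equation $\mathcal{V}_2(\lambda) = \lambda$ has at least one positive solution. -/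
/-!
The exponent `2 λ μ_M / L_m - λ² N_m / L_M` is a downward parabola, so the numerator
`exp(…)` tends to a positive constant at `0⁺` and to `0` at `∞`, while
`erf(√(N_M/L_m) λ)` is positive and tends to `0` at `0⁺` and to `1` at `∞`. Hence `𝒱₂`
blows up at `0⁺` and vanishes at `∞`, so `𝒱₂(λ) - λ` changes sign on `(0, ∞)` and the
intermediate value theorem gives a fixed point.
-/

open Real Filter Set Topology MeasureTheory

lemma intervalIntegrable_exp_neg_sq (a b : ℝ) :
    IntervalIntegrable (fun t => exp (-t ^ 2)) volume a b :=
  (by fun_prop : Continuous fun t : ℝ => exp (-t ^ 2)).intervalIntegrable a b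

lemma continuous_erf : Continuous erf :=
  continuous_const.mul (intervalIntegral.continuous_primitive intervalIntegrable_exp_neg_sq 0)

lemma erf_zero : erf 0 = 0 := by simp [erf]

lemma erf_pos {x : ℝ} (hx : 0 < x) : 0 < erf x :=
  mul_pos (by positivity) (intervalIntegral.intervalIntegral_pos_of_pos
    (intervalIntegrable_exp_neg_sq 0 x) (fun t => exp_pos _) hx)

lemma tendsto_erf_atTop : Tendsto erf atTop (𝓝 1) := by
  have hint : IntegrableOn (fun t : ℝ => exp (-t ^ 2)) (Ioi 0) := by
    simpa using (integrable_exp_neg_mul_sq one_pos).integrableOn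
  have hval : ∫ t in Ioi (0 : ℝ), exp (-t ^ 2) = √π / 2 := by
    simpa using integral_gaussian_Ioi 1
  have h := (intervalIntegral_tendsto_integral_Ioi 0 hint tendsto_id).const_mul (2 / √π)
  have hone : 2 / √π * (√π / 2) = 1 := by field_simp
  rwa [hval, hone] at h

lemma tendsto_erf_const_mul_nhdsGT_zero {c : ℝ} (hc : 0 < c) :
    Tendsto (fun x => erf (c * x)) (𝓝[>] 0) (𝓝[>] 0) := by
  refine tendsto_nhdsWithin_of_tendsto_nhds_of_eventually_within _ ?_ ?_
  · have h := (continuous_erf.comp (continuous_const_mul c)).tendsto 0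
    simp only [Function.comp_def, mul_zero, erf_zero] at h
    exact h.mono_left nhdsWithin_le_nhds
  · filter_upwards [self_mem_nhdsWithin] with x hx using erf_pos (mul_pos hc hx)

lemma tendsto_mul_sub_mul_sq_atTop_atBot (a : ℝ) {b : ℝ} (hb : 0 < b) :
    Tendsto (fun x : ℝ => a * x - b * x ^ 2) atTop atBot := by
  have h : Tendsto (fun x : ℝ => x * (a - b * x)) atTop atBot :=
    tendsto_id.atTop_mul_atBot₀ <|
      tendsto_atBot_add_const_left _ a <| tendsto_neg_atTop_atBot.comp <|
        tendsto_id.const_mul_atTop hb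
  exact h.congr fun x => by ring

section ExpDivErf

variable {C c : ℝ} {e : ℝ → ℝ}

lemma continuousOn_mul_exp_div_erf (hc : 0 < c) (he : Continuous e) :
    ContinuousOn (fun x => C * (exp (e x) / erf (c * x))) (Ioi 0) :=
  continuousOn_const.mul <| he.rexp.continuousOn.div
    (continuous_erf.comp (continuous_const_mul c)).continuousOn
    fun _ hx => (erf_pos (mul_pos hc hx)).ne'

lemma mul_exp_div_erf_pos (hC : 0 < C) (hc : 0 < c) (y : ℝ) {x : ℝ} (hx : 0 < x) :
    0 < C * (exp y / erf (c * x)) :=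
  mul_pos hC (div_pos (exp_pos _) (erf_pos (mul_pos hc hx)))

lemma tendsto_mul_exp_div_erf_nhdsGT_zero (hC : 0 < C) (hc : 0 < c) (he : ContinuousAt e 0) :
    Tendsto (fun x => C * (exp (e x) / erf (c * x))) (𝓝[>] 0) atTop := by
  have hnum : Tendsto (fun x => C * exp (e x)) (𝓝[>] 0) (𝓝 (C * exp (e 0))) :=
    ((continuous_exp.continuousAt.comp he).tendsto.const_mul C).mono_left nhdsWithin_le_nhds
  have h := hnum.pos_mul_atTop (by positivity)
    (tendsto_inv_nhdsGT_zero.comp (tendsto_erf_const_mul_nhdsGT_zero hc))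
  exact h.congr fun x => by simp only [Function.comp_apply, div_eq_mul_inv, mul_assoc]

lemma tendsto_mul_exp_div_erf_atTop (hc : 0 < c) (he : Tendsto e atTop atBot) :
    Tendsto (fun x => C * (exp (e x) / erf (c * x))) atTop (𝓝 0) := by
  have h := ((tendsto_exp_atBot.comp he).div
    (tendsto_erf_atTop.comp (tendsto_id.const_mul_atTop hc)) one_ne_zero).const_mul C
  rwa [zero_div, mul_zero] at h

end ExpDivErf

lemma exists_pos_eq_self_of_tendsto {f : ℝ → ℝ} (hf : ContinuousOn f (Ioi 0))
    (h₀ : Tendsto f (𝓝[>] 0) atTop) (h_top : Tendsto f atTop (𝓝 0)) :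
    ∃ x, 0 < x ∧ f x = x := by
  have hlt : id ≤ᶠ[𝓝[>] 0] f := by
    filter_upwards [h₀.eventually_ge_atTop 1, Ioo_mem_nhdsGT one_pos] with x hfx hx
    exact hx.2.le.trans hfx
  have hgt : f ≤ᶠ[atTop] id := by
    filter_upwards [h_top.eventually_le_const one_pos, eventually_ge_atTop 1] with x hfx hx
    exact hfx.trans hx
  obtain ⟨x, hx, hfx⟩ := isPreconnected_Ioi.intermediate_value₂_eventually₂ (l₁ := 𝓝[>] 0)
    inf_le_right (le_principal_iff.2 (Ioi_mem_atTop 0)) continuousOn_id hf hlt hgt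
  exact ⟨x, hx, hfx.symm⟩

theorem stmt_8_general (Ste NM Nm Lm LM muM : ℝ)
    (hSte : 0 < Ste) (hNM : 0 < NM) (hNm : 0 < Nm) (hLm : 0 < Lm)
    (hLM : 0 < LM)
    (V₂ : ℝ → ℝ)
    (hV₂ : ∀ lam, 0 < lam → V₂ lam =
      Ste / Real.sqrt Real.pi * (Real.sqrt NM / Real.sqrt Lm) * LM *
        (Real.exp (2 * lam * muM / Lm - lam ^ 2 * Nm / LM) /
          erf (Real.sqrt (NM / Lm) * lam))) :
    ContinuousOn V₂ (Set.Ioi 0) ∧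
    (∀ lam ∈ Set.Ioi (0:ℝ), 0 < V₂ lam) ∧
    Filter.Tendsto V₂ (nhdsWithin 0 (Set.Ioi 0)) Filter.atTop ∧
    Filter.Tendsto V₂ Filter.atTop (nhds 0) ∧
    (∃ lam : ℝ, 0 < lam ∧ V₂ lam = lam) := by
  have hC : 0 < Ste / √π * (√NM / √Lm) * LM := by positivity
  have hc : 0 < √(NM / Lm) := sqrt_pos.2 (by positivity)
  have he : Tendsto (fun lam : ℝ => 2 * lam * muM / Lm - lam ^ 2 * Nm / LM) atTop atBot :=
    (tendsto_mul_sub_mul_sq_atTop_atBot (2 * muM / Lm) (by positivity : 0 < Nm / LM)).congr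
      fun lam => by ring
  have hEq : EqOn V₂ _ (Ioi 0) := fun lam hlam => hV₂ lam hlam
  have hcont := (continuousOn_mul_exp_div_erf hc (by fun_prop)).congr hEq
  have h₀ := (tendsto_mul_exp_div_erf_nhdsGT_zero hC hc (by fun_prop)).congr'
    (eventuallyEq_nhdsWithin_of_eqOn hEq).symm
  have h_top := (tendsto_mul_exp_div_erf_atTop hc he).congr'
    (hEq.eventuallyEq_of_mem (Ioi_mem_atTop 0)).symm
  exact ⟨hcont, fun lam hlam => hV₂ lam hlam ▸ mul_exp_div_erf_pos hC hc _ hlam, h₀, h_top,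
    exists_pos_eq_self_of_tendsto hcont h₀ h_top⟩

theorem stmt_8 (Ste NM Nm Lm LM muM : ℝ)
    (hSte : 0 < Ste) (hNM : 0 < NM) (hNm : 0 < Nm) (hLm : 0 < Lm)
    (hLM : 0 < LM) (hmuM : 0 < muM)
    (V₂ : ℝ → ℝ)
    (hV₂ : ∀ lam, 0 < lam → V₂ lam =
      Ste / Real.sqrt Real.pi * (Real.sqrt NM / Real.sqrt Lm) * LM *
        (Real.exp (2 * lam * muM / Lm - lam ^ 2 * Nm / LM) /
          erf (Real.sqrt (NM / Lm) * lam))) :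
    ContinuousOn V₂ (Set.Ioi 0) ∧
    (∀ lam ∈ Set.Ioi (0:ℝ), 0 < V₂ lam) ∧
    Filter.Tendsto V₂ (nhdsWithin 0 (Set.Ioi 0)) Filter.atTop ∧
    Filter.Tendsto V₂ Filter.atTop (nhds 0) ∧
    (∃ lam : ℝ, 0 < lam ∧ V₂ lam = lam) :=
  stmt_8_general Ste NM Nm Lm LM muM hSte hNM hNm hLm hLM V₂ hV₂
end

section
/- Let $c > 0$ and $\mathrm{Pe} \in \mathbb{R}$ with $\mathrm{Pe} \le \sqrt{2}$. Then the equation $\lambda \exp(\lambda^2 - 2\lambda\,\mathrm{Pe}) = c$ has exactly one solution $\lambda > 0$. -/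
/-!
The map `h(λ) = λ exp(λ² - 2λ Pe)` has derivative `exp(λ² - 2λ Pe) (1 + 2λ² - 2λ Pe)`, and for
`λ > 0` the second factor is at least `(√2 λ - 1)²` because `Pe ≤ √2`. So `h` is strictly
increasing on `[0, ∞)` (its derivative vanishes at most at `λ = √2 / 2`), with `h 0 = 0` and
`h λ ≥ λ` once `λ ≥ 2 Pe`; the intermediate value theorem gives the solution.
-/

open Real Set

theorem strictMonoOn_Ici_of_deriv_pos_of_ne {f : ℝ → ℝ} {a c : ℝ} (hac : a ≤ c)
    (hf : ContinuousOn f (Ici a)) (hf' : ∀ x, a < x → x ≠ c → 0 < deriv f x) :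
    StrictMonoOn f (Ici a) := by
  rw [← Icc_union_Ici_eq_Ici hac]
  refine StrictMonoOn.union ?_ ?_ (isGreatest_Icc hac) isLeast_Ici
  · refine strictMonoOn_of_deriv_pos (convex_Icc a c) (hf.mono Icc_subset_Ici_self) ?_
    rw [interior_Icc]
    exact fun x hx => hf' x hx.1 hx.2.ne
  · refine strictMonoOn_of_deriv_pos (convex_Ici c) (hf.mono (Ici_subset_Ici.2 hac)) ?_
    rw [interior_Ici]
    exact fun x hx => hf' x (hac.trans_lt hx) (ne_of_gt hx)

namespace Stefan

noncomputable def profile (Pe l : ℝ) : ℝ := l * exp (l ^ 2 - 2 * l * Pe)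

variable {Pe : ℝ}

theorem continuous_profile : Continuous (profile Pe) := by
  unfold profile
  fun_prop

theorem hasDerivAt_profile (x : ℝ) :
    HasDerivAt (profile Pe) (exp (x ^ 2 - 2 * x * Pe) * (1 + 2 * x ^ 2 - 2 * x * Pe)) x := by
  have hinner : HasDerivAt (fun l => l ^ 2 - 2 * l * Pe) (2 * x - 2 * Pe) x :=
    (((hasDerivAt_id' x).fun_pow 2).fun_sub
      (((hasDerivAt_id' x).const_mul 2).mul_const Pe)).congr_deriv (by norm_num)
  exact ((hasDerivAt_id' x).fun_mul hinner.exp).congr_deriv (by ring)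

theorem profile_zero : profile Pe 0 = 0 := by
  simp [profile]

theorem le_profile_self {x : ℝ} (hx : 0 ≤ x) (hPex : 2 * Pe ≤ x) : x ≤ profile Pe x := by
  have hexp : 1 ≤ exp (x ^ 2 - 2 * x * Pe) := one_le_exp_iff.2 (by nlinarith)
  simpa [profile] using mul_le_mul_of_nonneg_left hexp hx

theorem one_add_two_sq_sub_pos (hPe : Pe ≤ √2) {x : ℝ} (hx : 0 < x) (hne : x ≠ √2 / 2) :
    0 < 1 + 2 * x ^ 2 - 2 * x * Pe := by
  have hs : √2 ^ 2 = 2 := sq_sqrt zero_le_two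
  have hsq : 0 < (√2 * x - 1) ^ 2 := by
    refine pow_two_pos_of_ne_zero fun h => hne ?_
    field_simp
    nlinarith
  nlinarith [mul_le_mul_of_nonneg_left hPe hx.le]

theorem strictMonoOn_profile (hPe : Pe ≤ √2) : StrictMonoOn (profile Pe) (Ici 0) := by
  refine strictMonoOn_Ici_of_deriv_pos_of_ne (by positivity : (0 : ℝ) ≤ √2 / 2)
    continuous_profile.continuousOn fun x hx hne => ?_
  rw [(hasDerivAt_profile x).deriv]
  exact mul_pos (exp_pos _) (one_add_two_sq_sub_pos hPe hx hne)

end Stefan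

open Stefan in
theorem stmt_14 (c Pe : ℝ) (hc : 0 < c) (hPe : Pe ≤ Real.sqrt 2) :
    ∃! lam : ℝ, 0 < lam ∧ lam * Real.exp (lam ^ 2 - 2 * lam * Pe) = c := by
  set M := max c (2 * Pe)
  have hM : 0 ≤ M := hc.le.trans (le_max_left _ _)
  have hcM : c ∈ Icc (profile Pe 0) (profile Pe M) := by
    rw [profile_zero]
    exact ⟨hc.le, (le_max_left _ _).trans (le_profile_self hM (le_max_right _ _))⟩
  obtain ⟨lam, hlam, hval⟩ := intermediate_value_Icc hM continuous_profile.continuousOn hcM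
  have hpos : 0 < lam := hlam.1.lt_of_ne fun h0 => by
    rw [← h0, profile_zero] at hval
    exact hc.ne hval
  refine ⟨lam, ⟨hpos, hval⟩, fun y ⟨hy, hyval⟩ => ?_⟩
  exact (strictMonoOn_profile hPe).injOn (mem_Ici.2 hy.le) (mem_Ici.2 hpos.le)
    (hyval.trans hval.symm)
end
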